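/- Let n, d ≥ 1 and let f, f̂ be integers with 0 ≤ f ≤ f̂ < n/2, and let κ̂ ≥ 0, κ ≥ 0. If an aggregator A : (ℝ^d)ⁿ → ℝ^d is both (f̂,κ̂)-robust and (f,κ)-robust, then κ ≥ f̂/(n − f − f̂). -/

import Mathlib

open Finset

/-- An aggregator `A : (ℝ^d)^n → ℝ^d` is `(f,κ)`-robust if for all inputs `x₁, …, x_n`
and every `S ⊆ {1,…,n}` with `|S| = n - f`, writing `x̄_S` for the average over `S`,
`‖A x - x̄_S‖² ≤ (κ/|S|) ∑_{i∈S} ‖x_i - x̄_S‖²`. -/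
def IsRobust (n d fq : ℕ) (κ : ℝ)
    (A : (Fin n → EuclideanSpace ℝ (Fin d)) → EuclideanSpace ℝ (Fin d)) : Prop :=
  ∀ (x : Fin n → EuclideanSpace ℝ (Fin d)) (S : Finset (Fin n)), S.card = n - fq →
    ‖A x - (S.card : ℝ)⁻¹ • ∑ i ∈ S, x i‖ ^ 2
      ≤ κ / (S.card : ℝ) * ∑ i ∈ S, ‖x i - (S.card : ℝ)⁻¹ • ∑ j ∈ S, x j‖ ^ 2

/-! The lower bound is witnessed by a single input: `n - f̂` zeros and `f̂` copies of a unit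
vector `v`. Robustness with respect to the `n - f̂` zeros forces the output to be `0`. A set `T`
of `n - f` indices containing all copies of `v` has mean `p • v` with `p = f̂ / (n - f)` and
variance `p (1 - p)`, so `(f, κ)`-robustness on `T` reads `p² ≤ κ p (1 - p)`. -/

lemma sum_sq_boole_sub_mean {ι : Type*} [DecidableEq ι] {B T : Finset ι} (hBT : B ⊆ T) :
    ∑ i ∈ T, ((if i ∈ B then 1 else 0) - (#T : ℝ)⁻¹ * #B) ^ 2
      = (#B * (#T - #B) / #T : ℝ) := by
  obtain rfl | hT := T.eq_empty_or_nonempty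
  · simp [subset_empty.1 hBT]
  have hT : (#T : ℝ) ≠ 0 := Nat.cast_ne_zero.2 hT.card_pos.ne'
  rw [← sum_sdiff hBT]
  have hout : ∀ i ∈ T \ B, ((if i ∈ B then 1 else 0) - (#T : ℝ)⁻¹ * #B) ^ 2
      = ((#T : ℝ)⁻¹ * #B) ^ 2 := fun i hi => by simp [(mem_sdiff.1 hi).2]
  have hin : ∀ i ∈ B, ((if i ∈ B then 1 else 0) - (#T : ℝ)⁻¹ * #B) ^ 2
      = (1 - (#T : ℝ)⁻¹ * #B) ^ 2 := fun i hi => by simp [hi]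
  rw [sum_congr rfl hout, sum_congr rfl hin, sum_const, sum_const, nsmul_eq_mul, nsmul_eq_mul,
    card_sdiff_of_subset hBT, Nat.cast_sub (card_le_card hBT)]
  field_simp
  ring

namespace IsRobust

variable {n d fq : ℕ} {κ : ℝ} {A : (Fin n → EuclideanSpace ℝ (Fin d)) → EuclideanSpace ℝ (Fin d)}

lemma apply_eq_zero (hA : IsRobust n d fq κ A) {x : Fin n → EuclideanSpace ℝ (Fin d)}
    {S : Finset (Fin n)} (hS : #S = n - fq) (hx : ∀ i ∈ S, x i = 0) : A x = 0 := by
  have hsum : ∑ i ∈ S, x i = 0 := sum_eq_zero hx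
  have hvar : ∑ i ∈ S, ‖x i - (#S : ℝ)⁻¹ • ∑ j ∈ S, x j‖ ^ 2 = 0 :=
    sum_eq_zero fun i hi => by simp [hsum, hx i hi]
  have h := hA x S hS
  rw [hvar, hsum, mul_zero] at h
  simpa using h

lemma sq_mean_le (hA : IsRobust n d fq κ A) {v : EuclideanSpace ℝ (Fin d)} (hv : ‖v‖ = 1)
    {g : Fin n → ℝ} (hAg : A (fun i => g i • v) = 0) {S : Finset (Fin n)} (hS : #S = n - fq) :
    ((#S : ℝ)⁻¹ * ∑ i ∈ S, g i) ^ 2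
      ≤ κ / #S * ∑ i ∈ S, (g i - (#S : ℝ)⁻¹ * ∑ j ∈ S, g j) ^ 2 := by
  simpa only [hAg, ← sum_smul, smul_smul, ← sub_smul, zero_sub, norm_neg, norm_smul, hv,
    mul_one, Real.norm_eq_abs, sq_abs] using hA (fun i => g i • v) S hS

end IsRobust

lemma div_sub_le_of_sq_le {k m κ : ℝ} (hk : 0 < k) (hkm : k < m)
    (h : (m⁻¹ * k) ^ 2 ≤ κ / m * (k * (m - k) / m)) : k / (m - k) ≤ κ := by
  have hm : 0 < m := hk.trans hkm
  rw [div_le_iff₀ (sub_pos.2 hkm)]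
  have : k * k ≤ κ * (m - k) * k := by
    have := mul_le_mul_of_nonneg_right h (sq_nonneg m)
    field_simp at this
    nlinarith
  exact le_of_mul_le_mul_right this hk

theorem stmt_2_general (n d f fhat : ℕ) (hd : 1 ≤ d)
    (hf : f ≤ fhat) (hfn : 2 * fhat < n) (khat κ : ℝ) (hκ : 0 ≤ κ)
    (A : (Fin n → EuclideanSpace ℝ (Fin d)) → EuclideanSpace ℝ (Fin d))
    (hA1 : IsRobust n d fhat khat A) (hA2 : IsRobust n d f κ A) :
    (fhat : ℝ) / ((n : ℝ) - f - fhat) ≤ κ := by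
  rcases Nat.eq_zero_or_pos fhat with rfl | hfhat
  · simpa using hκ
  obtain ⟨v, hv⟩ : ∃ v : EuclideanSpace ℝ (Fin d), ‖v‖ = 1 :=
    ⟨EuclideanSpace.single ⟨0, hd⟩ 1, by simp⟩
  obtain ⟨B, -, hB⟩ := exists_subset_card_eq (s := (univ : Finset (Fin n))) (n := fhat)
    (by rw [card_univ, Fintype.card_fin]; omega)
  obtain ⟨T, hBT, -, hT⟩ := exists_subsuperset_card_eq (subset_univ B) (n := n - f)
    (by omega) (by simp)
  set g : Fin n → ℝ := fun i => if i ∈ B then 1 else 0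
  have hAx : A (fun i => g i • v) = 0 :=
    hA1.apply_eq_zero (S := Bᶜ) (by simp [card_compl, hB]) fun i hi => by
      simp [g, mem_compl.1 hi]
  have key := hA2.sq_mean_le hv hAx hT
  have hsum : ∑ i ∈ T, g i = #B := by simp [g, inter_eq_right.2 hBT]
  rw [hsum, sum_sq_boole_sub_mean hBT, hB, hT, Nat.cast_sub (by omega)] at key
  exact div_sub_le_of_sq_le (by exact_mod_cast hfhat)
    (by rw [lt_sub_iff_add_lt]; exact_mod_cast (by omega : fhat + f < n)) key

/-- If `0 ≤ f ≤ f̂ < n/2` and `A` is both `(f̂,κ̂)`-robust and `(f,κ)`-robust,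
then `κ ≥ f̂ / (n - f - f̂)`. -/
theorem stmt_2 (n d f fhat : ℕ) (hn : 1 ≤ n) (hd : 1 ≤ d)
    (hf : f ≤ fhat) (hfn : 2 * fhat < n) (khat κ : ℝ) (hkhat : 0 ≤ khat) (hκ : 0 ≤ κ)
    (A : (Fin n → EuclideanSpace ℝ (Fin d)) → EuclideanSpace ℝ (Fin d))
    (hA1 : IsRobust n d fhat khat A) (hA2 : IsRobust n d f κ A) :
    (fhat : ℝ) / ((n : ℝ) - f - fhat) ≤ κ :=
  stmt_2_general n d f fhat hd hf hfn khat κ hκ A hA1 hA2
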